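/- arXiv:2304.06549 — 2 statements merged into one kernel-verified Lean document; each statement's English description precedes it below -/
import Mathlib

section
/- For any d ≥ 1 and any θ = (θ^1,...,θ^d) ∈ [0, π/2]^d, it holds that ‖sin(θ)‖² ‖sin(2θ)‖² − ⟨sin(2θ), sin(θ)⟩² − 4 ‖sin(θ)‖² Σ_{i=1}^d sin⁴(θ^i) ≤ 0, where sin is applied componentwise, ‖·‖ is the Euclidean norm, and ⟨·,·⟩ the Euclidean inner product. -/
/-!
Write `A = ∑ sin² θⁱ`, `B = ∑ sin⁴ θⁱ` and `K = ∑ sin² θⁱ cos θⁱ`. Since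
`sin² 2θ = 4 sin² θ cos² θ` and `sin 2θ sin θ = 2 sin² θ cos θ`, the left-hand side equals
`4 (A (A - B) - K² - A B)`. On `[0, π/2]` we have `0 ≤ cos ≤ 1`, hence `cos² ≤ cos` and
`0 ≤ A - B = ∑ sin² cos² ≤ K`; so `K² ≥ (A - B)² ≥ A² - 2AB`, which is the claim.
-/

open Real Finset

namespace Real

lemma sin_sq_sub_sin_pow_four (x : ℝ) : sin x ^ 2 - sin x ^ 4 = sin x ^ 2 * cos x ^ 2 := by
  rw [cos_sq']; ring

lemma sin_two_mul_sq (x : ℝ) : sin (2 * x) ^ 2 = 4 * (sin x ^ 2 - sin x ^ 4) := by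
  rw [sin_sq_sub_sin_pow_four, sin_two_mul]; ring

lemma sin_sq_sub_sin_pow_four_le_sin_sq_mul_cos {x : ℝ} (hx : 0 ≤ cos x) :
    sin x ^ 2 - sin x ^ 4 ≤ sin x ^ 2 * cos x := by
  rw [sin_sq_sub_sin_pow_four, pow_two (cos x), ← mul_assoc]
  exact mul_le_of_le_one_right (by positivity) (cos_le_one x)

end Real

variable {ι : Type*} (s : Finset ι) (θ : ι → ℝ)

lemma sum_sin_two_mul_sq :
    ∑ i ∈ s, sin (2 * θ i) ^ 2 = 4 * (∑ i ∈ s, sin (θ i) ^ 2 - ∑ i ∈ s, sin (θ i) ^ 4) := by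
  simp only [sin_two_mul_sq, ← mul_sum, sum_sub_distrib]

lemma sum_sin_two_mul_mul_sin :
    ∑ i ∈ s, sin (2 * θ i) * sin (θ i) = 2 * ∑ i ∈ s, sin (θ i) ^ 2 * cos (θ i) := by
  rw [mul_sum]
  exact sum_congr rfl fun i _ => by rw [sin_two_mul]; ring

lemma sum_sin_sq_sub_sum_sin_pow_four_nonneg :
    0 ≤ ∑ i ∈ s, sin (θ i) ^ 2 - ∑ i ∈ s, sin (θ i) ^ 4 := by
  rw [← sum_sub_distrib]
  exact sum_nonneg fun i _ => by rw [sin_sq_sub_sin_pow_four]; positivity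

lemma sum_sin_sq_sub_sum_sin_pow_four_le (hθ : ∀ i ∈ s, 0 ≤ cos (θ i)) :
    ∑ i ∈ s, sin (θ i) ^ 2 - ∑ i ∈ s, sin (θ i) ^ 4 ≤ ∑ i ∈ s, sin (θ i) ^ 2 * cos (θ i) := by
  rw [← sum_sub_distrib]
  exact sum_le_sum fun i hi => sin_sq_sub_sin_pow_four_le_sin_sq_mul_cos (hθ i hi)

lemma sq_mul_sub_sq_sub_mul_nonpos {A B K : ℝ} (hB : 0 ≤ B) (hAB : 0 ≤ A - B)
    (hK : A - B ≤ K) : A * (4 * (A - B)) - (2 * K) ^ 2 - 4 * A * B ≤ 0 := by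
  nlinarith [mul_le_mul hK hK hAB (hAB.trans hK)]

theorem stmt_2_general (d : ℕ) (θ : Fin d → ℝ)
    (hθ : ∀ i, θ i ∈ Set.Icc 0 (π / 2)) :
    (∑ i, sin (θ i) ^ 2) * (∑ i, sin (2 * θ i) ^ 2)
      - (∑ i, sin (2 * θ i) * sin (θ i)) ^ 2
      - 4 * (∑ i, sin (θ i) ^ 2) * (∑ i, sin (θ i) ^ 4) ≤ 0 := by
  have hcos : ∀ i ∈ univ, 0 ≤ cos (θ i) := fun i _ =>
    cos_nonneg_of_mem_Icc ⟨by linarith [(hθ i).1, pi_pos], (hθ i).2⟩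
  rw [sum_sin_two_mul_sq, sum_sin_two_mul_mul_sin]
  exact sq_mul_sub_sq_sub_mul_nonpos (sum_nonneg fun i _ => by positivity)
    (sum_sin_sq_sub_sum_sin_pow_four_nonneg univ θ)
    (sum_sin_sq_sub_sum_sin_pow_four_le univ θ hcos)

theorem stmt_2 (d : ℕ) (hd : 1 ≤ d) (θ : Fin d → ℝ)
    (hθ : ∀ i, θ i ∈ Set.Icc 0 (π / 2)) :
    (∑ i, sin (θ i) ^ 2) * (∑ i, sin (2 * θ i) ^ 2)
      - (∑ i, sin (2 * θ i) * sin (θ i)) ^ 2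
      - 4 * (∑ i, sin (θ i) ^ 2) * (∑ i, sin (θ i) ^ 4) ≤ 0 :=
  stmt_2_general d θ hθ
end

section
/- Let α ≤ 0, D > 0. Then ∫₀^D e^{−(α/8)r²} ∫₀^r e^{(α/8)s²} ds dr ≤ ∫₀^D r e^{−(α/8)r²} dr = (4/|α|)(e^{|α|D²/8} − 1) when α < 0. Consequently λ_V = (∫₀^D Φ/φ)^{-1} ≥ (|α|/4)/(e^{|α|D²/8} − 1). -/
open Real intervalIntegral

/-
With `φ(r) = e^{(α/8)r²} ≤ 1` we have `Φ(r) ≤ r`, so `Φ/φ ≤ r e^{-(α/8)r²}` pointwise,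
and the latter integrates in closed form since `r e^{b r²}` is the derivative of `e^{b r²}/(2b)`.
Inverting the integral bound gives the lower bound on `λ_V`.
-/

lemma integral_exp_mul_sq_le_self {a r : ℝ} (ha : a ≤ 0) (hr : 0 ≤ r) :
    ∫ s in (0:ℝ)..r, exp (a * s ^ 2) ≤ r := by
  have h : ∫ s in (0:ℝ)..r, exp (a * s ^ 2) ≤ ∫ _ in (0:ℝ)..r, (1 : ℝ) := by
    refine integral_mono_on hr ((by fun_prop : Continuous _).intervalIntegrable _ _)
      intervalIntegrable_const fun s _ => ?_
    rw [exp_le_one_iff]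
    nlinarith [sq_nonneg s]
  simpa using h

lemma continuous_exp_neg_mul_sq_mul_primitive (a : ℝ) :
    Continuous fun r : ℝ => exp (-a * r ^ 2) * ∫ s in (0:ℝ)..r, exp (a * s ^ 2) :=
  (by fun_prop : Continuous fun r : ℝ => exp (-a * r ^ 2)).mul
    (continuous_primitive (fun _ _ => (by fun_prop : Continuous _).intervalIntegrable _ _) 0)

lemma integral_exp_neg_mul_sq_mul_primitive_le {a D : ℝ} (ha : a ≤ 0) (hD : 0 ≤ D) :
    ∫ r in (0:ℝ)..D, exp (-a * r ^ 2) * ∫ s in (0:ℝ)..r, exp (a * s ^ 2)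
      ≤ ∫ r in (0:ℝ)..D, r * exp (-a * r ^ 2) := by
  refine integral_mono_on hD ((continuous_exp_neg_mul_sq_mul_primitive a).intervalIntegrable _ _)
    ((by fun_prop : Continuous _).intervalIntegrable _ _) fun r hr => ?_
  rw [mul_comm r]
  exact mul_le_mul_of_nonneg_left (integral_exp_mul_sq_le_self ha hr.1) (exp_pos _).le

lemma integral_exp_neg_mul_sq_mul_primitive_pos (a : ℝ) {D : ℝ} (hD : 0 < D) :
    0 < ∫ r in (0:ℝ)..D, exp (-a * r ^ 2) * ∫ s in (0:ℝ)..r, exp (a * s ^ 2) := by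
  refine intervalIntegral_pos_of_pos_on
    ((continuous_exp_neg_mul_sq_mul_primitive a).intervalIntegrable _ _) (fun r hr => ?_) hD
  exact mul_pos (exp_pos _)
    (intervalIntegral_pos_of_pos_on ((by fun_prop : Continuous _).intervalIntegrable _ _)
      (fun _ _ => exp_pos _) hr.1)

lemma integral_mul_exp_mul_sq {b : ℝ} (hb : b ≠ 0) (D : ℝ) :
    ∫ r in (0:ℝ)..D, r * exp (b * r ^ 2) = (exp (b * D ^ 2) - 1) / (2 * b) := by
  have hderiv (r : ℝ) :
      HasDerivAt (fun r => exp (b * r ^ 2) / (2 * b)) (r * exp (b * r ^ 2)) r := by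
    have h := (((hasDerivAt_pow 2 r).const_mul b).exp).div_const (2 * b)
    refine h.congr_deriv ?_
    push_cast
    field_simp
  rw [integral_eq_sub_of_hasDerivAt (fun r _ => hderiv r)
    ((by fun_prop : Continuous _).intervalIntegrable _ _)]
  simp [sub_div]

/-- Explicit lower bound on the contraction rate `λ_V` for a constant
semiconvexity modulus `κ_V = α ≤ 0` (Appendix C), where
`φ(r) = e^{(α/8)r²}` and `Φ(r) = ∫₀^r φ`. -/
theorem stmt_17 (α D : ℝ) (hα : α ≤ 0) (hD : 0 < D) :
    (∫ r in (0:ℝ)..D, Real.exp (-(α / 8) * r ^ 2) * ∫ s in (0:ℝ)..r, Real.exp ((α / 8) * s ^ 2))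
        ≤ ∫ r in (0:ℝ)..D, r * Real.exp (-(α / 8) * r ^ 2) ∧
    (α < 0 → (∫ r in (0:ℝ)..D, r * Real.exp (-(α / 8) * r ^ 2))
        = (4 / |α|) * (Real.exp (|α| * D ^ 2 / 8) - 1)) ∧
    (∫ r in (0:ℝ)..D, Real.exp (-(α / 8) * r ^ 2) * ∫ s in (0:ℝ)..r, Real.exp ((α / 8) * s ^ 2))⁻¹
        ≥ (|α| / 4) / (Real.exp (|α| * D ^ 2 / 8) - 1) := by
  have hle := integral_exp_neg_mul_sq_mul_primitive_le (by linarith : α / 8 ≤ 0) hD.le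
  have hpos := integral_exp_neg_mul_sq_mul_primitive_pos (α / 8) hD
  have hclosed (hα' : α < 0) : ∫ r in (0:ℝ)..D, r * exp (-(α / 8) * r ^ 2)
      = (4 / |α|) * (exp (|α| * D ^ 2 / 8) - 1) := by
    rw [integral_mul_exp_mul_sq (by linarith) D, abs_of_neg hα']
    field_simp
    ring_nf
  refine ⟨hle, hclosed, ?_⟩
  rcases hα.lt_or_eq with hα' | rfl
  · calc (|α| / 4) / (exp (|α| * D ^ 2 / 8) - 1)
        = ((4 / |α|) * (exp (|α| * D ^ 2 / 8) - 1))⁻¹ := by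
          rw [mul_inv, inv_div, div_eq_mul_inv]
      _ ≤ _ := inv_anti₀ hpos (hle.trans_eq (hclosed hα'))
  · -- for `α = 0` the right-hand side is the junk value `0 / 0 = 0`
    simpa using (inv_pos.mpr hpos).le
end
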